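/- Let C = cone(T) with T convex and contained in {x : ⟨x, a⟩ = 1}, a = (1, 0, ..., 0), Ω = max_{x∈T} ‖x‖₂, and let R₀ > 0. Define the stable region C_≥ := C ∩ {R : ⟨R, a⟩ ≥ R₀}. Then for all R₁, R₂ ∈ C_≥: ‖R₁/⟨R₁,a⟩ − R₂/⟨R₂,a⟩‖₂ ≤ (Ω/R₀)·‖R₁ − R₂‖₂, i.e., the normalization map R ↦ R/⟨R,a⟩ is (Ω/R₀)-Lipschitz on C_≥. -/

import Mathlib

/-!
Write `N R = ⟪R, a⟫⁻¹ • R`. Points of `cone(T)` are normalized into `T`, and with `D = R₁ - R₂`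
one has the identity `⟪R₁, a⟫ • (N R₁ - N R₂) = D - ⟪D, a⟫ • N R₂`. The map `D ↦ D - ⟪D, a⟫ • y`
with `⟪y, a⟫ = 1` is a projection whose complementary projection `D ↦ ⟪D, a⟫ • y` has norm `‖y‖`,
and it has norm at most `‖y‖` as well: splitting `D` and `y` along `a` and its orthogonal complement
reduces this to Cauchy–Schwarz in `ℝ²`. Hence `⟪R₁, a⟫ ‖N R₁ - N R₂‖ ≤ Ω ‖R₁ - R₂‖`.
-/

open scoped RealInnerProductSpace

/-- The conic hull `{α • x : x ∈ S, α ≥ 0}`. -/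
def coneOf {E : Type*} [AddCommMonoid E] [Module ℝ E] (S : Set E) : Set E :=
  {y | ∃ α : ℝ, 0 ≤ α ∧ ∃ x ∈ S, y = α • x}

section InnerProductSpace

variable {E : Type*} [NormedAddCommGroup E] [InnerProductSpace ℝ E]

lemma norm_sq_eq_norm_sub_inner_smul_sq_add_inner_sq {a : E} (ha : ‖a‖ = 1) (x : E) :
    ‖x‖ ^ 2 = ‖x - ⟪x, a⟫ • a‖ ^ 2 + ⟪x, a⟫ ^ 2 := by
  have horth : ⟪x - ⟪x, a⟫ • a, ⟪x, a⟫ • a⟫ = 0 := by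
    simp only [inner_sub_left, inner_smul_left, inner_smul_right, real_inner_self_eq_norm_sq, ha,
      conj_trivial]
    ring
  have := norm_add_sq_eq_norm_sq_add_norm_sq_real horth
  rw [sub_add_cancel, norm_smul, ha, Real.norm_eq_abs] at this
  nlinarith [sq_abs ⟪x, a⟫]

lemma norm_sub_inner_smul_le {a y : E} (ha : ‖a‖ = 1) (hy : ⟪y, a⟫ = 1) (x : E) :
    ‖x - ⟪x, a⟫ • y‖ ≤ ‖y‖ * ‖x‖ := by
  set δ := ⟪x, a⟫
  set u := x - δ • a
  set z := y - a
  have hx : ‖x‖ ^ 2 = ‖u‖ ^ 2 + δ ^ 2 := norm_sq_eq_norm_sub_inner_smul_sq_add_inner_sq ha x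
  have hy' : ‖y‖ ^ 2 = ‖z‖ ^ 2 + 1 := by
    simpa [hy] using norm_sq_eq_norm_sub_inner_smul_sq_add_inner_sq ha y
  have hsplit : x - δ • y = u - δ • z := by
    simp only [u, z, smul_sub]
    abel
  calc ‖x - δ • y‖ = ‖u - δ • z‖ := by rw [hsplit]
    _ ≤ ‖u‖ + |δ| * ‖z‖ := by
      rw [← Real.norm_eq_abs, ← norm_smul]
      exact norm_sub_le _ _
    _ ≤ ‖y‖ * ‖x‖ := by
      refine le_of_sq_le_sq ?_ (by positivity)
      rw [mul_pow, hx, hy']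
      nlinarith [sq_nonneg (‖u‖ * ‖z‖ - |δ|), sq_abs δ, abs_nonneg δ, norm_nonneg u,
        norm_nonneg z]

lemma abs_inner_mul_norm_inv_inner_smul_sub_le {a R₁ R₂ : E} (ha : ‖a‖ = 1)
    (h₁ : ⟪R₁, a⟫ ≠ 0) (h₂ : ⟪R₂, a⟫ ≠ 0) :
    |⟪R₁, a⟫| * ‖⟪R₁, a⟫⁻¹ • R₁ - ⟪R₂, a⟫⁻¹ • R₂‖ ≤ ‖⟪R₂, a⟫⁻¹ • R₂‖ * ‖R₁ - R₂‖ := by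
  set y := ⟪R₂, a⟫⁻¹ • R₂
  have hy : ⟪y, a⟫ = 1 := by rw [real_inner_smul_left, inv_mul_cancel₀ h₂]
  have hR₂ : R₂ = ⟪R₂, a⟫ • y := by rw [smul_inv_smul₀ h₂]
  have hidentity : ⟪R₁, a⟫ • (⟪R₁, a⟫⁻¹ • R₁ - y) = (R₁ - R₂) - ⟪R₁ - R₂, a⟫ • y := by
    rw [smul_sub, smul_inv_smul₀ h₁, inner_sub_left, sub_smul, ← hR₂]
    abel
  rw [← Real.norm_eq_abs, ← norm_smul, hidentity]
  exact norm_sub_inner_smul_le ha hy _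

lemma inv_inner_smul_mem_of_mem_coneOf {T : Set E} {a R : E} (hT : ∀ x ∈ T, ⟪x, a⟫ = 1)
    (hR : R ∈ coneOf T) (hRa : ⟪R, a⟫ ≠ 0) : ⟪R, a⟫⁻¹ • R ∈ T := by
  obtain ⟨α, -, x, hx, rfl⟩ := hR
  rw [real_inner_smul_left, hT x hx, mul_one] at hRa ⊢
  rwa [inv_smul_smul₀ hRa]

end InnerProductSpace

theorem normalization_lipschitz_on_stable_region_general {n : ℕ}
    (T : Set (EuclideanSpace ℝ (Fin (n + 1))))
    (a : EuclideanSpace ℝ (Fin (n + 1))) (ha : a = EuclideanSpace.single 0 1)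
    (hT : ∀ x ∈ T, ⟪x, a⟫ = 1)
    (Ω : ℝ) (hΩ : IsGreatest (norm '' T) Ω)
    (R₀ : ℝ) (hR₀ : 0 < R₀)
    (R₁ R₂ : EuclideanSpace ℝ (Fin (n + 1)))
    (h₁ : R₁ ∈ coneOf T ∩ {R | R₀ ≤ ⟪R, a⟫})
    (h₂ : R₂ ∈ coneOf T ∩ {R | R₀ ≤ ⟪R, a⟫}) :
    ‖(⟪R₁, a⟫)⁻¹ • R₁ - (⟪R₂, a⟫)⁻¹ • R₂‖ ≤ (Ω / R₀) * ‖R₁ - R₂‖ := by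
  have hanorm : ‖a‖ = 1 := by simp [ha]
  have hR₁a : 0 < ⟪R₁, a⟫ := hR₀.trans_le h₁.2
  have hR₂a : 0 < ⟪R₂, a⟫ := hR₀.trans_le h₂.2
  have hΩbound : ‖⟪R₂, a⟫⁻¹ • R₂‖ ≤ Ω :=
    hΩ.2 ⟨_, inv_inner_smul_mem_of_mem_coneOf hT h₂.1 hR₂a.ne', rfl⟩
  have hkey := abs_inner_mul_norm_inv_inner_smul_sub_le hanorm hR₁a.ne' hR₂a.ne'
  rw [abs_of_pos hR₁a] at hkey
  rw [div_mul_eq_mul_div, le_div_iff₀ hR₀]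
  calc ‖⟪R₁, a⟫⁻¹ • R₁ - ⟪R₂, a⟫⁻¹ • R₂‖ * R₀
      ≤ ‖⟪R₁, a⟫⁻¹ • R₁ - ⟪R₂, a⟫⁻¹ • R₂‖ * ⟪R₁, a⟫ := by gcongr; exact h₁.2
    _ ≤ ‖⟪R₂, a⟫⁻¹ • R₂‖ * ‖R₁ - R₂‖ := by linarith
    _ ≤ Ω * ‖R₁ - R₂‖ := by gcongr

/-- On the stable region `C_≥ = cone(T) ∩ {R : ⟨R, a⟩ ≥ R₀}`, the normalization map
`R ↦ R / ⟨R, a⟩` is `(Ω / R₀)`-Lipschitz. -/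
theorem normalization_lipschitz_on_stable_region {n : ℕ}
    (T : Set (EuclideanSpace ℝ (Fin (n + 1))))
    (hne : T.Nonempty) (hcomp : IsCompact T) (hconv : Convex ℝ T)
    (a : EuclideanSpace ℝ (Fin (n + 1))) (ha : a = EuclideanSpace.single 0 1)
    (hT : ∀ x ∈ T, ⟪x, a⟫ = 1)
    (Ω : ℝ) (hΩ : IsGreatest (norm '' T) Ω)
    (R₀ : ℝ) (hR₀ : 0 < R₀)
    (R₁ R₂ : EuclideanSpace ℝ (Fin (n + 1)))
    (h₁ : R₁ ∈ coneOf T ∩ {R | R₀ ≤ ⟪R, a⟫})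
    (h₂ : R₂ ∈ coneOf T ∩ {R | R₀ ≤ ⟪R, a⟫}) :
    ‖(⟪R₁, a⟫)⁻¹ • R₁ - (⟪R₂, a⟫)⁻¹ • R₂‖ ≤ (Ω / R₀) * ‖R₁ - R₂‖ :=
  normalization_lipschitz_on_stable_region_general T a ha hT Ω hΩ R₀ hR₀ R₁ R₂ h₁ h₂
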